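/- Let G_1, …, G_n be finite abelian groups, 𝒢 = G_1 × ⋯ × G_n, and for each i let 𝒫_i = (P_{i,1} | … | P_{i,M_i}) be a Fourier-reflexive partition of G_i with dual 𝒫̂_i = (Q_{i,1} | … | Q_{i,M_i}); let K^{(i)} ∈ ℂ^{M_i×M_i} be the Krawtchouk matrix of (𝒫̂_i, 𝒫_i), i.e., K^{(i)}_{m,ℓ} = Σ_{χ∈Q_{i,ℓ}} χ(g) for any g ∈ P_{i,m}. For a subgroup C ≤ 𝒢 define the product partition enumerator PE_{𝒬,C} = Σ_{g∈C} ∏_{i=1}^n X_{i,m(g_i)} in ℂ[X_{i,m} : 1 ≤ i ≤ n, 1 ≤ m ≤ M_i], where m(g_i) is the index with g_i ∈ P_{i,m(g_i)}, and define PE_{𝒬̂,C^⊥} = Σ_{χ∈C^⊥} ∏_{i=1}^n X_{i,m(χ_i)} with m(χ_i) the index with χ_i ∈ Q_{i,m(χ_i)}. Then PE_{𝒬̂,C^⊥} = (1/|C|) · ℳ'(PE_{𝒬,C}), where ℳ' is the ℂ-algebra homomorphism determined by ℳ'(X_{i,m}) = Σ_{ℓ=1}^{M_i} K^{(i)}_{m,ℓ}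 X_{i,ℓ}. -/

import Mathlib

open Finset
open scoped Classical

variable {ι : Type*} [Fintype ι] [DecidableEq ι]
  {H : ι → Type*} [∀ i, AddCommGroup (H i)] [∀ i, Fintype (H i)]

/-- The `i`-th component of a character of a product group, under the canonical
identification of the character group of a product with the product of the character
groups. -/
noncomputable def comp1 (χ : AddChar (∀ i, H i) ℂ) (i : ι) : AddChar (H i) ℂ :=
  χ.compAddMonoidHom (AddMonoidHom.single H i)

/-! The MacWilliams transform sends the monomial of `g` to `∑_χ χ(g) · (monomial of χ)`: locally
this is the definition of the Krawtchouk coefficients, and the product over the coordinates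
expands into a sum over tuples of characters, i.e. over characters of the product group.
Summing over `g ∈ C`, orthogonality of characters on `C` leaves `|C|` times the enumerator
of `C^⊥`. -/

theorem Fintype.sum_smul_fiberwise {α β R V : Type*} [Fintype α] [Fintype β] [Semiring R]
    [AddCommMonoid V] [Module R V] (f : α → β) (w : α → R) (v : β → V) :
    ∑ b, (∑ a, if f a = b then w a else 0) • v b = ∑ a, w a • v (f a) := by
  simp only [Finset.sum_smul, ite_smul, zero_smul]
  rw [Finset.sum_comm]
  simp

namespace AddChar

theorem map_sum_eq_prod {A M β : Type*} [AddCommMonoid A] [CommMonoid M] (ψ : AddChar A M)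
    (s : Finset β) (x : β → A) : ψ (∑ b ∈ s, x b) = ∏ b ∈ s, ψ (x b) :=
  map_prod ψ.toMonoidHom (fun b => Multiplicative.ofAdd (x b)) s

theorem sum_ite_mem_eq_ite {A R : Type*} [AddCommGroup A] [Fintype A] [CommRing R] [IsDomain R]
    (χ : AddChar A R) (C : AddSubgroup A) :
    ∑ g, (if g ∈ C then χ g else 0) = if ∀ h ∈ C, χ h = 1 then (Nat.card C : R) else 0 := by
  have hres : χ.compAddMonoidHom C.subtype = 0 ↔ ∀ h ∈ C, χ h = 1 := by
    simp [AddChar.eq_zero_iff]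
  rw [← Finset.sum_filter, Finset.sum_subtype _ (fun _ => Finset.mem_filter_univ _) χ,
    Nat.card_eq_fintype_card]
  exact (χ.compAddMonoidHom C.subtype).sum_eq_ite.trans (if_congr hres rfl rfl)

variable {G : ι → Type*} [∀ i, AddCommMonoid (G i)] {M : Type*} [CommMonoid M]

noncomputable def piEquiv : AddChar (∀ i, G i) M ≃ ∀ i, AddChar (G i) M where
  toFun χ i := χ.compAddMonoidHom (AddMonoidHom.single G i)
  invFun ψ :=
    { toFun g := ∏ i, ψ i (g i)
      map_zero_eq_one' := by simp
      map_add_eq_mul' g g' := by simp [AddChar.map_add_eq_mul, Finset.prod_mul_distrib] }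
  left_inv χ := by
    ext g
    simp [← map_sum_eq_prod, Finset.univ_sum_single]
  right_inv ψ := by
    funext i
    ext x
    show ∏ j, ψ j (Pi.single i x j) = ψ i x
    rw [Fintype.prod_eq_single i fun j hj => by simp [Pi.single_eq_of_ne hj]]
    simp

theorem prod_piEquiv_apply (χ : AddChar (∀ i, G i) M) (g : ∀ i, G i) :
    ∏ i, piEquiv χ i (g i) = χ g := by
  conv_rhs => rw [← piEquiv.symm_apply_apply χ]
  rfl

end AddChar

theorem aeval_prod_X_eq_sum_addChar {κ : ι → Type*} [∀ i, Fintype (κ i)]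
    (p : ∀ i, H i → κ i) (q : ∀ i, AddChar (H i) ℂ → κ i) (K : ∀ i, κ i → κ i → ℂ)
    (hK : ∀ (i : ι) (g : H i) (ℓ : κ i),
      K i (p i g) ℓ = ∑ᶠ χ : AddChar (H i) ℂ, if q i χ = ℓ then χ g else 0)
    (g : ∀ i, H i) :
    (MvPolynomial.aeval fun s : Σ i, κ i =>
        ∑ ℓ : κ s.1, MvPolynomial.C (K s.1 s.2 ℓ) * MvPolynomial.X ⟨s.1, ℓ⟩)
      (∏ i, (MvPolynomial.X ⟨i, p i (g i)⟩ : MvPolynomial (Σ i, κ i) ℂ)) =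
    ∑ χ : AddChar (∀ i, H i) ℂ,
      χ g • ∏ i, (MvPolynomial.X ⟨i, q i (comp1 χ i)⟩ : MvPolynomial (Σ i, κ i) ℂ) := by
  simp only [map_prod, MvPolynomial.aeval_X, MvPolynomial.C_mul', hK, finsum_eq_sum_of_fintype,
    Fintype.sum_smul_fiberwise, Fintype.prod_sum, Finset.prod_smul]
  rw [← AddChar.piEquiv.sum_comp]
  simp only [AddChar.prod_piEquiv_apply]
  rfl

theorem macwilliams_product_partition_enumerator_general
    {κ : ι → Type*} [∀ i, Fintype (κ i)]
    (p : ∀ i, H i → κ i) (q : ∀ i, AddChar (H i) ℂ → κ i)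
    (K : ∀ i, κ i → κ i → ℂ)
    (hK : ∀ (i : ι) (g : H i) (ℓ : κ i),
      K i (p i g) ℓ = ∑ᶠ χ : AddChar (H i) ℂ, if q i χ = ℓ then χ g else 0)
    (C : AddSubgroup (∀ i, H i))
    (PE PEdual : MvPolynomial (Σ i, κ i) ℂ)
    (hPE : PE = ∑ g : ∀ i, H i,
      if g ∈ C then ∏ i, MvPolynomial.X ⟨i, p i (g i)⟩ else 0)
    (hPEdual : PEdual = ∑ᶠ χ : AddChar (∀ i, H i) ℂ,
      if ∀ h ∈ C, χ h = 1 then ∏ i, MvPolynomial.X ⟨i, q i (comp1 χ i)⟩ else 0) :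
    PEdual = (Nat.card C : ℂ)⁻¹ •
      (MvPolynomial.aeval fun s : Σ i, κ i =>
        ∑ ℓ : κ s.1, MvPolynomial.C (K s.1 s.2 ℓ) * MvPolynomial.X ⟨s.1, ℓ⟩) PE := by
  set monomial : AddChar (∀ i, H i) ℂ → MvPolynomial (Σ i, κ i) ℂ :=
    fun χ => ∏ i, MvPolynomial.X ⟨i, q i (comp1 χ i)⟩
  have hcard : (Nat.card C : ℂ) ≠ 0 := Nat.cast_ne_zero.2 Nat.card_pos.ne'
  rw [eq_inv_smul_iff₀ hcard]
  calc (Nat.card C : ℂ) • PEdual = ∑ χ, (∑ g, if g ∈ C then χ g else 0) • monomial χ := by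
        simp only [AddChar.sum_ite_mem_eq_ite, hPEdual, finsum_eq_sum_of_fintype, Finset.smul_sum,
          ite_smul, zero_smul, smul_ite, smul_zero, monomial]
    _ = _ := by
        simp only [hPE, map_sum, apply_ite, map_zero, aeval_prod_X_eq_sum_addChar p q K hK,
          Finset.ite_sum_zero, Finset.sum_smul, ite_smul, zero_smul, monomial]
        exact Finset.sum_comm

/-- **MacWilliams identity for product partition enumerators.**
For each `i`, the fibers of `p i` are the blocks of a Fourier-reflexive partition `𝒫ᵢ` of
`G i` and the fibers of `q i` are the blocks of its dual partition `𝒫̂ᵢ` (hypothesis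
`hdual`); `K i` is the Krawtchouk matrix of `(𝒫̂ᵢ, 𝒫ᵢ)`.  For a code `C ≤ G₁ × ⋯ × Gₙ`,
the product partition enumerator of the dual code `C^⊥` equals `|C|⁻¹` times the image of
the product partition enumerator of `C` under the MacWilliams transformation `ℳ'`, the
algebra homomorphism with `ℳ'(X_{i,m}) = Σ_ℓ K^{(i)}_{m,ℓ} X_{i,ℓ}`. -/
theorem macwilliams_product_partition_enumerator
    {κ : ι → Type*} [∀ i, Fintype (κ i)]
    (p : ∀ i, H i → κ i) (q : ∀ i, AddChar (H i) ℂ → κ i)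
    (hp : ∀ i, Function.Surjective (p i)) (hq : ∀ i, Function.Surjective (q i))
    (hdual : ∀ (i : ι) (χ χ' : AddChar (H i) ℂ),
      q i χ = q i χ' ↔ ∀ m : κ i,
        (∑ g : H i, if p i g = m then χ g else 0) =
        (∑ g : H i, if p i g = m then χ' g else 0))
    (K : ∀ i, κ i → κ i → ℂ)
    (hK : ∀ (i : ι) (g : H i) (ℓ : κ i),
      K i (p i g) ℓ = ∑ᶠ χ : AddChar (H i) ℂ, if q i χ = ℓ then χ g else 0)
    (C : AddSubgroup (∀ i, H i))
    (PE PEdual : MvPolynomial (Σ i, κ i) ℂ)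
    (hPE : PE = ∑ g : ∀ i, H i,
      if g ∈ C then ∏ i, MvPolynomial.X ⟨i, p i (g i)⟩ else 0)
    (hPEdual : PEdual = ∑ᶠ χ : AddChar (∀ i, H i) ℂ,
      if ∀ h ∈ C, χ h = 1 then ∏ i, MvPolynomial.X ⟨i, q i (comp1 χ i)⟩ else 0) :
    PEdual = (Nat.card C : ℂ)⁻¹ •
      (MvPolynomial.aeval fun s : Σ i, κ i =>
        ∑ ℓ : κ s.1, MvPolynomial.C (K s.1 s.2 ℓ) * MvPolynomial.X ⟨s.1, ℓ⟩) PE :=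
  macwilliams_product_partition_enumerator_general p q K hK C PE PEdual hPE hPEdual
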